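/- arXiv:2308.13470 — 3 statements merged into one kernel-verified Lean document; each statement's English description precedes it below -/
import Mathlib

section
/- If the control set is unbounded above (ℓ̄ = +∞, i.e. controls take values in [ℓ̲, ∞)) and φ(1−σ) < ρ, then the simplified value function is identically zero: W(h₀) = 0 for every h₀ ≥ 0. -/
open MeasureTheory Real Set Filter

/-- State trajectory `h^{h₀,ℓ}(t) = e^{−φt} h₀ + φ ∫₀ᵗ e^{−φ(t−s)} ℓ(s) ds`. -/
noncomputable def traj (φ h₀ : ℝ) (ℓ : ℝ → ℝ) (t : ℝ) : ℝ :=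
  Real.exp (-(φ * t)) * h₀ + φ * ∫ s in (0:ℝ)..t, Real.exp (-(φ * (t - s))) * ℓ s

/-- Payoff `J(h₀,ℓ) = ∫₀^∞ e^{−ρt} ℓ(t)^{1−σ} (h^{h₀,ℓ}(t))^{γ(σ−1)} / (1−σ) dt`. -/
noncomputable def payoff (ρ φ σ γ h₀ : ℝ) (ℓ : ℝ → ℝ) : ℝ :=
  ∫ t in Set.Ioi (0:ℝ),
    Real.exp (-(ρ * t)) * (ℓ t ^ (1 - σ)) * (traj φ h₀ ℓ t ^ (γ * (σ - 1))) / (1 - σ)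

/-- Admissible controls: measurable, with values in `[ℓ̲, ℓ̄]` (where `ℓ̄` may be `+∞`). -/
def Admissible (lo : ℝ) (hi : EReal) (ℓ : ℝ → ℝ) : Prop :=
  Measurable ℓ ∧ ∀ t, 0 ≤ t → lo ≤ ℓ t ∧ (ℓ t : EReal) ≤ hi

/-- Simplified value function `W`. -/
noncomputable def W (ρ φ σ γ lo : ℝ) (hi : EReal) (h₀ : ℝ) : ℝ :=
  sSup {x | ∃ ℓ : ℝ → ℝ, Admissible lo hi ℓ ∧ x = payoff ρ φ σ γ h₀ ℓ}

/-!
Since `1 - σ < 0`, every payoff is nonpositive, so `W ≤ 0`. For a constant control `c` the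
trajectory is a convex combination of `h₀` and `c`, hence at most `h₀ + c`, so the payoff is at
least `-c ^ (1 - σ) * (h₀ + c) ^ (γ * (σ - 1)) / ((σ - 1) * ρ)`. This bound is of order
`c ^ (-(σ - 1) * (1 - γ))` and tends to `0` as `c → ∞` because `γ < 1`; unbounded controls
allow arbitrarily large constants, so `W = 0`.
-/

open Topology

lemma traj_nonneg {φ h₀ : ℝ} {ℓ : ℝ → ℝ} (hφ : 0 ≤ φ) (hh₀ : 0 ≤ h₀)
    (hℓ : ∀ s, 0 ≤ s → 0 ≤ ℓ s) {t : ℝ} (ht : 0 ≤ t) : 0 ≤ traj φ h₀ ℓ t := by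
  have hint : 0 ≤ ∫ s in (0:ℝ)..t, exp (-(φ * (t - s))) * ℓ s :=
    intervalIntegral.integral_nonneg ht fun s hs => mul_nonneg (exp_pos _).le (hℓ s hs.1)
  unfold traj
  positivity

lemma exp_mul_rpow_mul_rpow_div_one_sub_nonpos {σ x y : ℝ} (r a : ℝ) (hσ : 1 < σ)
    (hx : 0 ≤ x) (hy : 0 ≤ y) : exp r * x ^ (1 - σ) * y ^ a / (1 - σ) ≤ 0 :=
  div_nonpos_of_nonneg_of_nonpos (by positivity) (by linarith)

lemma payoff_nonpos {ρ φ σ γ lo h₀ : ℝ} {hi : EReal} {ℓ : ℝ → ℝ}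
    (hφ : 0 ≤ φ) (hσ : 1 < σ) (hlo : 0 ≤ lo) (hh₀ : 0 ≤ h₀) (hℓ : Admissible lo hi ℓ) :
    payoff ρ φ σ γ h₀ ℓ ≤ 0 := by
  have hℓ_nonneg : ∀ t, 0 ≤ t → 0 ≤ ℓ t := fun t ht => hlo.trans (hℓ.2 t ht).1
  exact setIntegral_nonpos measurableSet_Ioi fun t ht =>
    exp_mul_rpow_mul_rpow_div_one_sub_nonpos _ _ hσ (hℓ_nonneg t (le_of_lt ht))
      (traj_nonneg hφ hh₀ hℓ_nonneg (le_of_lt ht))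

lemma traj_const (φ h₀ c t : ℝ) :
    traj φ h₀ (fun _ => c) t = exp (-(φ * t)) * h₀ + c * (1 - exp (-(φ * t))) := by
  have hderiv : ∀ s ∈ uIcc 0 t,
      HasDerivAt (fun s => exp (-(φ * (t - s)))) (exp (-(φ * (t - s))) * φ) s := by
    intro s _
    have h := (((hasDerivAt_id s).const_sub t).const_mul φ).neg.exp
    simp only [id, mul_neg, mul_one, neg_neg] at h
    exact h
  have hint : φ * ∫ s in (0:ℝ)..t, exp (-(φ * (t - s))) * c
      = c * ∫ s in (0:ℝ)..t, exp (-(φ * (t - s))) * φ := by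
    simp only [intervalIntegral.integral_mul_const]
    ring
  rw [traj, hint, intervalIntegral.integral_eq_sub_of_hasDerivAt hderiv
    (by apply Continuous.intervalIntegrable; fun_prop)]
  simp

lemma traj_const_le {φ h₀ c t : ℝ} (hφ : 0 ≤ φ) (hh₀ : 0 ≤ h₀) (hc : 0 ≤ c) (ht : 0 ≤ t) :
    traj φ h₀ (fun _ => c) t ≤ h₀ + c := by
  have hexp_le : exp (-(φ * t)) ≤ 1 := exp_le_one_iff.mpr (by nlinarith)
  rw [traj_const]
  nlinarith [exp_pos (-(φ * t))]

lemma neg_div_le_setIntegral_Ioi_of_exp_bound {f : ℝ → ℝ} {ρ M : ℝ} (hρ : 0 < ρ)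
    (hf_nonpos : ∀ t ∈ Ioi (0:ℝ), f t ≤ 0)
    (hf_ge : ∀ t ∈ Ioi (0:ℝ), -(M * exp (-(ρ * t))) ≤ f t) :
    -(M / ρ) ≤ ∫ t in Ioi (0:ℝ), f t := by
  have hexp : ∫ t in Ioi (0:ℝ), exp (-ρ * t) = 1 / ρ := by
    simpa using integral_exp_mul_Ioi (neg_neg_of_pos hρ) 0
  have hg : IntegrableOn (fun t => M * exp (-ρ * t)) (Ioi 0) :=
    (integrableOn_exp_mul_Ioi (neg_neg_of_pos hρ) 0).const_mul M
  have hmono : ∫ t in Ioi (0:ℝ), -f t ≤ ∫ t in Ioi (0:ℝ), M * exp (-ρ * t) :=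
    integral_mono_of_nonneg
      (ae_restrict_of_forall_mem measurableSet_Ioi fun t ht => neg_nonneg.mpr (hf_nonpos t ht))
      hg
      (ae_restrict_of_forall_mem measurableSet_Ioi fun t ht => by
        simpa [neg_mul] using neg_le.mp (hf_ge t ht))
  rw [integral_neg, integral_const_mul, hexp] at hmono
  rw [div_eq_mul_one_div]
  linarith

lemma neg_le_payoff_const {ρ φ σ γ h₀ c : ℝ} (hρ : 0 < ρ) (hφ : 0 ≤ φ) (hσ : 1 < σ)
    (hγσ : 0 ≤ γ * (σ - 1)) (hh₀ : 0 ≤ h₀) (hc : 0 < c) :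
    -(c ^ (1 - σ) * (h₀ + c) ^ (γ * (σ - 1)) / (σ - 1) / ρ)
      ≤ payoff ρ φ σ γ h₀ (fun _ => c) := by
  refine neg_div_le_setIntegral_Ioi_of_exp_bound hρ (fun t ht => ?_) (fun t ht => ?_)
  · exact exp_mul_rpow_mul_rpow_div_one_sub_nonpos _ _ hσ hc.le
      (traj_nonneg hφ hh₀ (fun _ _ => hc.le) (le_of_lt ht))
  · have htraj : traj φ h₀ (fun _ => c) t ^ (γ * (σ - 1)) ≤ (h₀ + c) ^ (γ * (σ - 1)) :=
      rpow_le_rpow (traj_nonneg hφ hh₀ (fun _ _ => hc.le) (le_of_lt ht))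
        (traj_const_le hφ hh₀ hc.le (le_of_lt ht)) hγσ
    have hσ1 : σ - 1 ≠ 0 := by linarith
    rw [le_div_iff_of_neg (by linarith)]
    calc exp (-(ρ * t)) * c ^ (1 - σ) * traj φ h₀ (fun _ => c) t ^ (γ * (σ - 1))
        ≤ exp (-(ρ * t)) * c ^ (1 - σ) * (h₀ + c) ^ (γ * (σ - 1)) := by gcongr
      _ = _ := by field_simp; ring

lemma tendsto_rpow_neg_mul_add_rpow_atTop {a b h₀ : ℝ} (hab : a < b) (hh₀ : 0 ≤ h₀) :
    Tendsto (fun c : ℝ => c ^ (-b) * (h₀ + c) ^ a) atTop (𝓝 0) := by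
  have hratio : Tendsto (fun c : ℝ => (h₀ / c + 1) ^ a) atTop (𝓝 1) := by
    have := ((tendsto_const_nhds (x := h₀)).div_atTop tendsto_id).add_const 1
    simpa using this.rpow_const (p := a) (Or.inl (by norm_num))
  have hlim := (tendsto_rpow_neg_atTop (sub_pos.mpr hab)).mul hratio
  rw [zero_mul] at hlim
  refine hlim.congr' ?_
  filter_upwards [eventually_gt_atTop 0] with c hc
  rw [show h₀ + c = c * (h₀ / c + 1) by field_simp, mul_rpow hc.le (by positivity),
    ← mul_assoc, ← rpow_add hc, neg_sub, neg_add_eq_sub]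

lemma admissible_const {lo c : ℝ} (hc : lo ≤ c) : Admissible lo ⊤ (fun _ => c) :=
  ⟨measurable_const, fun _ _ => ⟨hc, le_top⟩⟩

lemma tendsto_payoff_const_atTop {ρ φ σ γ h₀ : ℝ} (hρ : 0 < ρ) (hφ : 0 ≤ φ) (hσ : 1 < σ)
    (hγσ : 0 ≤ γ * (σ - 1)) (hγ1 : γ < 1) (hh₀ : 0 ≤ h₀) :
    Tendsto (fun c => payoff ρ φ σ γ h₀ (fun _ => c)) atTop (𝓝 0) := by
  have hlower : Tendsto (fun c : ℝ => -(c ^ (1 - σ) * (h₀ + c) ^ (γ * (σ - 1)) / (σ - 1) / ρ))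
      atTop (𝓝 0) := by
    have h := ((tendsto_rpow_neg_mul_add_rpow_atTop (a := γ * (σ - 1)) (b := σ - 1)
      (by nlinarith) hh₀).div_const (σ - 1)).div_const ρ |>.neg
    simpa only [neg_sub, zero_div, neg_zero] using h
  refine tendsto_of_tendsto_of_tendsto_of_le_of_le' hlower tendsto_const_nhds ?_ ?_
  · filter_upwards [eventually_gt_atTop 0] with c hc
    exact neg_le_payoff_const hρ hφ hσ hγσ hh₀ hc
  · filter_upwards [eventually_ge_atTop 0] with c hc
    exact payoff_nonpos hφ hσ hc hh₀ (admissible_const le_rfl)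

theorem W_eq_zero_of_unbounded_general (ρ φ σ γ lo : ℝ)
    (hρ : 0 < ρ) (hφ : 0 < φ) (hσ : 1 < σ) (hγ1 : γ < 1)
    (hγσ : 1 < γ * (σ - 1)) (hlo : 0 < lo)
    (h₀ : ℝ) (hh₀ : 0 ≤ h₀) :
    W ρ φ σ γ lo ⊤ h₀ = 0 := by
  refine csSup_eq_of_forall_le_of_forall_lt_exists_gt
    ⟨_, fun _ => lo, admissible_const le_rfl, rfl⟩ ?_ ?_
  · rintro _ ⟨ℓ, hℓ, rfl⟩
    exact payoff_nonpos hφ.le hσ hlo.le hh₀ hℓ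
  · intro w hw
    obtain ⟨c, hwc, hloc⟩ := (((tendsto_payoff_const_atTop hρ hφ.le hσ (by linarith) hγ1
      hh₀).eventually_const_lt hw).and (eventually_ge_atTop lo)).exists
    exact ⟨_, ⟨fun _ => c, admissible_const hloc, rfl⟩, hwc⟩

/-- with unbounded controls (`ℓ̄ = +∞`) and `φ(1−σ) < ρ`,
the simplified value function is identically zero. -/
theorem W_eq_zero_of_unbounded (ρ φ σ γ lo : ℝ)
    (hρ : 0 < ρ) (hφ : 0 < φ) (hσ : 1 < σ) (hγ0 : 0 < γ) (hγ1 : γ < 1)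
    (hγσ : 1 < γ * (σ - 1)) (hlo : 0 < lo) (hcond : φ * (1 - σ) < ρ)
    (h₀ : ℝ) (hh₀ : 0 ≤ h₀) :
    W ρ φ σ γ lo ⊤ h₀ = 0 :=
  W_eq_zero_of_unbounded_general ρ φ σ γ lo hρ hφ hσ hγ1 hγσ hlo h₀ hh₀
end

section
/- Along the sequence of constant controls ℓₙ(t) ≡ n, the payoff tends to zero: J(h₀, n) = ∫₀^∞ e^{−ρt} n^{1−σ} (e^{−φt} h₀ + n(1 − e^{−φt}))^{γ(σ−1)} / (1−σ) dt → 0 as n → ∞, for every fixed h₀ ≥ 0. -/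
open MeasureTheory Real Set Filter

/-
For `t > 0` the state `e^{−φt} h₀ + n (1 − e^{−φt})` is a convex combination of `h₀` and `n`,
so once `n ≥ h₀` it lies in `[0, n]`. The integrand is then bounded by
`n^{1−σ+γ(σ−1)} e^{−ρt} / (σ−1)`, whose integral `n^{(σ−1)(γ−1)} / ((σ−1)ρ)` tends to `0`
because `γ < 1 < σ`.
-/

lemma norm_setIntegral_Ioi_le_of_norm_le_mul_exp {E : Type*} [NormedAddCommGroup E]
    [NormedSpace ℝ E] {f : ℝ → E} {C ρ : ℝ} (hρ : 0 < ρ)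
    (hf : ∀ t > 0, ‖f t‖ ≤ C * exp (-(ρ * t))) :
    ‖∫ t in Ioi 0, f t‖ ≤ C / ρ := by
  have hexp : IntegrableOn (fun t => exp (-(ρ * t))) (Ioi 0) := by
    simpa only [neg_mul] using exp_neg_integrableOn_Ioi 0 hρ
  calc ‖∫ t in Ioi 0, f t‖ ≤ ∫ t in Ioi 0, C * exp (-(ρ * t)) :=
        norm_integral_le_of_norm_le (hexp.const_mul C)
          ((ae_restrict_mem measurableSet_Ioi).mono hf)
    _ = C / ρ := by
        rw [integral_const_mul]
        simp only [← neg_mul, integral_exp_mul_Ioi (neg_neg_iff_pos.2 hρ), mul_zero, exp_zero]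
        field_simp

lemma convex_combination_mem_Icc {a x n : ℝ} (ha₀ : 0 ≤ a) (ha₁ : a ≤ 1) (hx : x ∈ Icc 0 n) :
    a * x + n * (1 - a) ∈ Icc 0 n := by
  have hn : n ∈ Icc 0 n := ⟨hx.1.trans hx.2, le_rfl⟩
  simpa only [smul_eq_mul, mul_comm n] using
    convex_Icc 0 n hx hn ha₀ (sub_nonneg.2 ha₁) (add_sub_cancel a 1)

lemma norm_payoff_integrand_le {ρ σ p n y t : ℝ} (hσ : 1 < σ) (hp : 0 ≤ p) (hn : 0 < n)
    (hy : y ∈ Icc 0 n) :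
    ‖exp (-(ρ * t)) * n ^ (1 - σ) * y ^ p / (1 - σ)‖
      ≤ n ^ (1 - σ + p) / (σ - 1) * exp (-(ρ * t)) := by
  have hy_pow : y ^ p ≤ n ^ p := rpow_le_rpow hy.1 hy.2 hp
  calc ‖exp (-(ρ * t)) * n ^ (1 - σ) * y ^ p / (1 - σ)‖
      = exp (-(ρ * t)) * n ^ (1 - σ) * y ^ p / (σ - 1) := by
        rw [norm_div, norm_of_nonneg (by have := hy.1; positivity), Real.norm_eq_abs,
          abs_of_neg (by linarith), neg_sub]
    _ ≤ exp (-(ρ * t)) * n ^ (1 - σ) * n ^ p / (σ - 1) := by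
        gcongr
    _ = n ^ (1 - σ + p) / (σ - 1) * exp (-(ρ * t)) := by
        rw [rpow_add hn]
        ring

lemma tendsto_natCast_rpow_atTop_zero {s : ℝ} (hs : s < 0) :
    Tendsto (fun n : ℕ => (n : ℝ) ^ s) atTop (nhds 0) := by
  have := (tendsto_rpow_neg_atTop (neg_pos.2 hs)).comp tendsto_natCast_atTop_atTop
  simpa only [neg_neg, Function.comp_def] using this

theorem payoff_const_tendsto_zero_general (ρ φ σ γ h₀ : ℝ)
    (hρ : 0 < ρ) (hφ : 0 < φ) (hσ : 1 < σ) (hγ1 : γ < 1)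
    (hγσ : 1 < γ * (σ - 1)) (hh₀ : 0 ≤ h₀) :
    Tendsto (fun n : ℕ =>
        ∫ t in Set.Ioi (0:ℝ),
          Real.exp (-(ρ * t)) * ((n : ℝ) ^ (1 - σ)) *
            ((Real.exp (-(φ * t)) * h₀ + (n : ℝ) * (1 - Real.exp (-(φ * t)))) ^ (γ * (σ - 1)))
            / (1 - σ))
      atTop (nhds 0) := by
  have hexponent : 1 - σ + γ * (σ - 1) < 0 := by nlinarith
  have hbound := ((tendsto_natCast_rpow_atTop_zero hexponent).div_const (σ - 1)).div_const ρ
  rw [zero_div, zero_div] at hbound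
  refine squeeze_zero_norm' ?_ hbound
  filter_upwards [tendsto_natCast_atTop_atTop.eventually_ge_atTop (max h₀ 1)] with n hn
  have hn₀ : (0 : ℝ) < n := lt_of_lt_of_le one_pos (le_of_max_le_right hn)
  refine norm_setIntegral_Ioi_le_of_norm_le_mul_exp hρ fun t ht => ?_
  have hdecay : exp (-(φ * t)) ≤ 1 := exp_le_one_iff.2 (by nlinarith)
  refine norm_payoff_integrand_le hσ (by linarith) hn₀ ?_
  exact convex_combination_mem_Icc (exp_pos _).le hdecay ⟨hh₀, le_of_max_le_left hn⟩

/-- along the constant controls `ℓₙ ≡ n`, the payoff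
`J(h₀, n) = ∫₀^∞ e^{−ρt} n^{1−σ} (e^{−φt} h₀ + n(1 − e^{−φt}))^{γ(σ−1)} / (1−σ) dt`
tends to `0` as `n → ∞`. -/
theorem payoff_const_tendsto_zero (ρ φ σ γ h₀ : ℝ)
    (hρ : 0 < ρ) (hφ : 0 < φ) (hσ : 1 < σ) (hγ0 : 0 < γ) (hγ1 : γ < 1)
    (hγσ : 1 < γ * (σ - 1)) (hh₀ : 0 ≤ h₀) :
    Tendsto (fun n : ℕ =>
        ∫ t in Set.Ioi (0:ℝ),
          Real.exp (-(ρ * t)) * ((n : ℝ) ^ (1 - σ)) *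
            ((Real.exp (-(φ * t)) * h₀ + (n : ℝ) * (1 - Real.exp (-(φ * t)))) ^ (γ * (σ - 1)))
            / (1 - σ))
      atTop (nhds 0) :=
  payoff_const_tendsto_zero_general ρ φ σ γ h₀ hρ hφ hσ hγ1 hγσ hh₀
end

section
/- Restricted to constant controls ℓ(t) ≡ l with l ∈ [ℓ̲, ℓ̄] (where ℓ̄ < +∞), the payoff J(h₀, l) = ∫₀^∞ e^{−ρt} l^{1−σ} (e^{−φt}(h₀ − l) + l)^{γ(σ−1)} / (1−σ) dt is maximized at l = ℓ̄; that is, sup over constant controls equals J(h₀, ℓ̄), and J(h₀, l) ≤ J(h₀, ℓ̄) for every l ∈ [ℓ̲, ℓ̄]. -/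
open MeasureTheory Real Set

/-! Since `1 - σ < 0`, maximising the payoff means minimising `l ^ (1 - σ) * h(t) ^ k` pointwise in
`t`, where `k = γ (σ - 1)`. With `a = e^{-φt} ∈ [0, 1]` this quantity factors as
`(a h₀ / l + 1 - a) ^ k * l ^ (k + 1 - σ)`: the first factor decreases in `l` because `k ≥ 0`, the
second because `k ≤ σ - 1`. So the payoff is monotone in `l` and the largest admissible constant
wins. -/

/-- Payoff of the constant control `ℓ(t) ≡ l`, whose trajectory is
`h(t) = e^{−φt}(h₀ − l) + l`. -/
noncomputable def Jconst (ρ φ σ γ h₀ l : ℝ) : ℝ :=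
  ∫ t in Set.Ioi (0:ℝ),
    Real.exp (-(ρ * t)) * (l ^ (1 - σ)) *
      ((Real.exp (-(φ * t)) * (h₀ - l) + l) ^ (γ * (σ - 1))) / (1 - σ)

lemma rpow_one_sub_mul_mix_rpow_eq {a h₀ σ k x : ℝ} (hx : 0 < x) (hH : 0 ≤ a * (h₀ - x) + x) :
    x ^ (1 - σ) * (a * (h₀ - x) + x) ^ k = (a * h₀ / x + (1 - a)) ^ k * x ^ (k + (1 - σ)) := by
  have hratio : a * h₀ / x + (1 - a) = (a * (h₀ - x) + x) / x := by field_simp; ring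
  rw [hratio, div_rpow hH hx.le, rpow_add hx]
  field_simp

lemma rpow_one_sub_mul_mix_rpow_le {a h₀ σ k l m : ℝ} (ha0 : 0 ≤ a) (ha1 : a ≤ 1)
    (hh₀ : 0 ≤ h₀) (hk : 0 ≤ k) (hkσ : k ≤ σ - 1) (hl : 0 < l) (hlm : l ≤ m) :
    m ^ (1 - σ) * (a * (h₀ - m) + m) ^ k ≤ l ^ (1 - σ) * (a * (h₀ - l) + l) ^ k := by
  have hm : 0 < m := hl.trans_le hlm
  have hah₀ : 0 ≤ a * h₀ := mul_nonneg ha0 hh₀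
  rw [rpow_one_sub_mul_mix_rpow_eq hm (by nlinarith), rpow_one_sub_mul_mix_rpow_eq hl (by nlinarith)]
  have hratio : a * h₀ / m + (1 - a) ≤ a * h₀ / l + (1 - a) := by gcongr
  exact mul_le_mul (rpow_le_rpow (by positivity) hratio hk)
    (rpow_le_rpow_of_nonpos hl hlm (by linarith)) (by positivity) (by positivity)

lemma integrableOn_payoff_integrand {ρ φ σ k h₀ l : ℝ} (hρ : 0 < ρ) (hφ : 0 ≤ φ) (hk : 0 ≤ k)
    (hh₀ : 0 ≤ h₀) (hl : 0 ≤ l) :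
    IntegrableOn (fun t => exp (-(ρ * t)) * l ^ (1 - σ) *
      (exp (-(φ * t)) * (h₀ - l) + l) ^ k / (1 - σ)) (Ioi 0) := by
  have hexp : IntegrableOn (fun t => exp (-(ρ * t))) (Ioi 0) := by
    simpa only [neg_mul] using exp_neg_integrableOn_Ioi 0 hρ
  have hbdd : ∀ᵐ t ∂(volume.restrict (Ioi 0)),
      ‖(exp (-(φ * t)) * (h₀ - l) + l) ^ k‖ ≤ max h₀ l ^ k := by
    filter_upwards [ae_restrict_mem measurableSet_Ioi] with t (ht : 0 < t)
    have ha0 := (exp_pos (-(φ * t))).le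
    have ha1 : exp (-(φ * t)) ≤ 1 := exp_le_one_iff.2 (by nlinarith)
    have hH : 0 ≤ exp (-(φ * t)) * (h₀ - l) + l := by nlinarith
    rw [norm_of_nonneg (rpow_nonneg hH k)]
    refine rpow_le_rpow hH ?_ hk
    nlinarith [le_max_left h₀ l, le_max_right h₀ l]
  have hmeas : AEStronglyMeasurable (fun t => (exp (-(φ * t)) * (h₀ - l) + l) ^ k)
      (volume.restrict (Ioi 0)) :=
    (Continuous.rpow_const (by fun_prop) fun _ => Or.inr hk).aestronglyMeasurable
  exact IntegrableOn.congr_fun ((hexp.bdd_mul hmeas hbdd).const_mul (l ^ (1 - σ) / (1 - σ)))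
    (fun t _ => by ring) measurableSet_Ioi

lemma Jconst_monotoneOn {ρ φ σ γ h₀ : ℝ} (hρ : 0 < ρ) (hφ : 0 ≤ φ) (hσ : 1 ≤ σ)
    (hγ0 : 0 ≤ γ) (hγ1 : γ ≤ 1) (hh₀ : 0 ≤ h₀) :
    MonotoneOn (Jconst ρ φ σ γ h₀) (Ioi 0) := by
  intro l (hl : (0 : ℝ) < l) m (hm : (0 : ℝ) < m) hlm
  have hk : 0 ≤ γ * (σ - 1) := mul_nonneg hγ0 (by linarith)
  have hkσ : γ * (σ - 1) ≤ σ - 1 := mul_le_of_le_one_left (by linarith) hγ1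
  refine setIntegral_mono_on (integrableOn_payoff_integrand hρ hφ hk hh₀ hl.le)
    (integrableOn_payoff_integrand hρ hφ hk hh₀ hm.le) measurableSet_Ioi fun t (ht : 0 < t) => ?_
  have ha1 : exp (-(φ * t)) ≤ 1 := exp_le_one_iff.2 (by nlinarith)
  have hpoint := rpow_one_sub_mul_mix_rpow_le (exp_pos _).le ha1 hh₀ hk hkσ hl hlm
  simp only [mul_assoc]
  exact div_le_div_of_nonpos_of_le (by linarith)
    (mul_le_mul_of_nonneg_left hpoint (exp_pos _).le)

theorem Jconst_max_at_top_general (ρ φ σ γ lo hi h₀ : ℝ)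
    (hρ : 0 < ρ) (hφ : 0 < φ) (hσ : 1 < σ) (hγ0 : 0 < γ) (hγ1 : γ < 1)
    (hlo : 0 < lo) (hlohi : lo ≤ hi) (hh₀ : 0 ≤ h₀) :
    (∀ l ∈ Set.Icc lo hi, Jconst ρ φ σ γ h₀ l ≤ Jconst ρ φ σ γ h₀ hi) ∧
      sSup ((fun l => Jconst ρ φ σ γ h₀ l) '' Set.Icc lo hi) = Jconst ρ φ σ γ h₀ hi := by
  have hmono : MonotoneOn (Jconst ρ φ σ γ h₀) (Icc lo hi) :=
    (Jconst_monotoneOn hρ hφ.le hσ.le hγ0.le hγ1.le hh₀).mono fun l hl => hlo.trans_le hl.1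
  have hgreatest := hmono.map_isGreatest (isGreatest_Icc hlohi)
  exact ⟨fun l hl => hgreatest.2 (mem_image_of_mem _ hl), hgreatest.csSup_eq⟩

/-- among constant controls `l ∈ [ℓ̲, ℓ̄]` (with `ℓ̄ < +∞`), the payoff is
maximized at `l = ℓ̄`: every constant control does no better than `ℓ̄`, and the supremum
over constant controls equals `J(h₀, ℓ̄)`. -/
theorem Jconst_max_at_top (ρ φ σ γ lo hi h₀ : ℝ)
    (hρ : 0 < ρ) (hφ : 0 < φ) (hσ : 1 < σ) (hγ0 : 0 < γ) (hγ1 : γ < 1)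
    (hγσ : 1 < γ * (σ - 1)) (hlo : 0 < lo) (hlohi : lo ≤ hi) (hh₀ : 0 ≤ h₀) :
    (∀ l ∈ Set.Icc lo hi, Jconst ρ φ σ γ h₀ l ≤ Jconst ρ φ σ γ h₀ hi) ∧
      sSup ((fun l => Jconst ρ φ σ γ h₀ l) '' Set.Icc lo hi) = Jconst ρ φ σ γ h₀ hi :=
  Jconst_max_at_top_general ρ φ σ γ lo hi h₀ hρ hφ hσ hγ0 hγ1 hlo hlohi hh₀
end
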